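/- arXiv:2505.02083 — 4 statements merged into one kernel-verified Lean document; each statement's English description precedes it below -/
import Mathlib

section
/- Let p ≥ 0 and let α₁,…,α_k and β₁,…,β_k be non-increasing sequences of nonnegative integers bounded above by p, with α₁ + ⋯ + α_j ≤ β₁ + ⋯ + β_j for all j = 1,…,k. If pα₁ + Σ_{i=1}^{k−1} α_i α_{i+1} = pβ₁ + Σ_{i=1}^{k−1} β_i β_{i+1}, then α_i = β_i for all i = 1,…,k. -/
/-!
Put `a₀ = b₀ = p` in front of both sequences and write `G j = ∑_{i<j} (bᵢ - aᵢ) ≥ 0` for the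
majorization gap. Summation by parts turns `∑ (bᵢbᵢ₊₁ - aᵢaᵢ₊₁)` into a sum of products
`(aᵢ - aᵢ₊₁) G (i+2)`, `(bᵢ₊₁ - bᵢ₊₂) G (i+1)` and two boundary terms, all nonnegative by
monotonicity. If the two product sums agree, every `(aᵢ - aᵢ₊₁) G (i+2)` vanishes, and this
propagates `aᵢ = bᵢ` from `i = 0` upwards: once `a = b` up to `i`, the gap `G (i+2)` is
`bᵢ₊₁ - aᵢ₊₁ ≤ aᵢ - aᵢ₊₁`, so it is killed by its own product with `aᵢ - aᵢ₊₁`.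
-/

open Finset

section PrefixSumGap

variable {R : Type*}

def prefixSumGap [AddCommGroup R] (a b : ℕ → R) (j : ℕ) : R :=
  ∑ i ∈ range j, (b i - a i)

theorem prefixSumGap_succ [AddCommGroup R] (a b : ℕ → R) (j : ℕ) :
    prefixSumGap a b (j + 1) = prefixSumGap a b j + (b j - a j) :=
  sum_range_succ _ _

theorem sum_sub_sum_mul_succ_eq [CommRing R] {a b : ℕ → R} (h0 : a 0 = b 0) (N : ℕ) :
    ∑ i ∈ range N, (b i * b (i + 1) - a i * a (i + 1)) =
      a N * prefixSumGap a b (N + 1) + b (N + 1) * prefixSumGap a b N +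
        ∑ i ∈ range N, ((a i - a (i + 1)) * prefixSumGap a b (i + 2) +
          (b (i + 1) - b (i + 2)) * prefixSumGap a b (i + 1)) := by
  induction N with
  | zero => simp [prefixSumGap, h0]
  | succ N ih =>
    rw [sum_range_succ, ih, sum_range_succ]
    simp only [prefixSumGap_succ]
    ring

variable [CommRing R] [LinearOrder R] [IsStrictOrderedRing R]

theorem mul_prefixSumGap_eq_zero_of_sum_mul_succ_eq {a b : ℕ → R} {N : ℕ}
    (ha : Antitone a) (hb : Antitone b) (haN : 0 ≤ a N) (hbN : 0 ≤ b (N + 1))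
    (h0 : a 0 = b 0) (hgap : ∀ j ≤ N + 1, 0 ≤ prefixSumGap a b j)
    (heq : ∑ i ∈ range N, a i * a (i + 1) = ∑ i ∈ range N, b i * b (i + 1)) :
    ∀ i < N, (a i - a (i + 1)) * prefixSumGap a b (i + 2) = 0 := by
  have hterm : ∀ i ∈ range N, 0 ≤ (a i - a (i + 1)) * prefixSumGap a b (i + 2) ∧
      0 ≤ (b (i + 1) - b (i + 2)) * prefixSumGap a b (i + 1) := by
    intro i hi
    have hi := mem_range.1 hi
    exact ⟨mul_nonneg (sub_nonneg.2 (ha i.le_succ)) (hgap _ (by omega)),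
      mul_nonneg (sub_nonneg.2 (hb (i + 1).le_succ)) (hgap _ (by omega))⟩
  have hpair i (hi : i ∈ range N) := add_nonneg (hterm i hi).1 (hterm i hi).2
  have hsum := sum_sub_sum_mul_succ_eq h0 N
  rw [sum_sub_distrib, heq, sub_self] at hsum
  have hzero := (sum_eq_zero_iff_of_nonneg hpair).1 <| by
    linarith [sum_nonneg hpair, mul_nonneg haN (hgap (N + 1) le_rfl),
      mul_nonneg hbN (hgap N (by omega))]
  intro i hi
  linarith [hterm i (mem_range.2 hi), hzero i (mem_range.2 hi)]

theorem eq_of_sum_mul_succ_eq {a b : ℕ → R} {N : ℕ}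
    (ha : Antitone a) (hb : Antitone b) (haN : 0 ≤ a N) (hbN : 0 ≤ b (N + 1))
    (h0 : a 0 = b 0)
    (hmaj : ∀ j ≤ N + 1, ∑ i ∈ range j, a i ≤ ∑ i ∈ range j, b i)
    (heq : ∑ i ∈ range N, a i * a (i + 1) = ∑ i ∈ range N, b i * b (i + 1)) :
    ∀ i ≤ N, a i = b i := by
  have hgap : ∀ j ≤ N + 1, 0 ≤ prefixSumGap a b j := fun j hj => by
    rw [prefixSumGap, sum_sub_distrib, sub_nonneg]
    exact hmaj j hj
  have hvanish := mul_prefixSumGap_eq_zero_of_sum_mul_succ_eq ha hb haN hbN h0 hgap heq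
  suffices h : ∀ i ≤ N, a i = b i ∧ prefixSumGap a b (i + 1) = 0 from fun i hi => (h i hi).1
  intro i
  induction i with
  | zero => simp [prefixSumGap, h0]
  | succ i ih =>
    intro hi
    obtain ⟨hai, hgi⟩ := ih (by omega)
    have hgap' : prefixSumGap a b (i + 2) = b (i + 1) - a (i + 1) := by
      rw [prefixSumGap_succ, hgi, zero_add]
    have hpos := hgap (i + 2) (by omega)
    have hdrop := hvanish i (by omega)
    rw [hgap'] at hpos hdrop
    have hbi : b (i + 1) ≤ b i := hb i.le_succ
    have hdiff : b (i + 1) - a (i + 1) = 0 := by nlinarith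
    exact ⟨by linarith, hgap'.trans hdiff⟩

end PrefixSumGap

theorem sum_range_succ_eq_add_sum_Icc {M : Type*} [AddCommMonoid M] (f : ℕ → M) (m : ℕ) :
    ∑ i ∈ range (m + 1), f i = f 0 + ∑ i ∈ Icc 1 m, f i := by
  rw [sum_range_eq_add_Ico f (by omega : 0 < m + 1), Ico_add_one_right_eq_Icc]

section PadSeq

variable (p : ℤ) (k : ℕ) (α : ℕ → ℤ)

def padSeq (i : ℕ) : ℤ :=
  if i = 0 then p else if i ≤ k then α i else 0

theorem padSeq_of_mem {i : ℕ} (hi : 1 ≤ i) (hik : i ≤ k) : padSeq p k α i = α i := by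
  simp [padSeq, hik, show i ≠ 0 by omega]

theorem antitone_padSeq (hk : 1 ≤ k) (hmono : ∀ i, 1 ≤ i → i < k → α (i + 1) ≤ α i)
    (hnn : ∀ i, 1 ≤ i → i ≤ k → 0 ≤ α i) (hub : ∀ i, 1 ≤ i → i ≤ k → α i ≤ p) :
    Antitone (padSeq p k α) := by
  refine antitone_nat_of_succ_le fun i => ?_
  rcases Nat.eq_zero_or_pos i with rfl | hi
  · simpa [padSeq, hk] using hub 1 le_rfl hk
  · by_cases hik : i < k
    · rw [padSeq_of_mem p k α (by omega) hik, padSeq_of_mem p k α hi hik.le]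
      exact hmono i hi hik
    · simp only [padSeq, show i + 1 ≠ 0 by omega, show ¬i + 1 ≤ k by omega, if_false]
      split_ifs with h0 hle
      · omega
      · exact hnn i hi hle
      · exact le_rfl

theorem sum_range_succ_padSeq {j : ℕ} (hj : j ≤ k) :
    ∑ i ∈ range (j + 1), padSeq p k α i = p + ∑ i ∈ Icc 1 j, α i := by
  rw [sum_range_succ_eq_add_sum_Icc]
  congr 1
  exact sum_congr rfl fun i hi => padSeq_of_mem p k α (mem_Icc.1 hi).1 ((mem_Icc.1 hi).2.trans hj)

theorem sum_range_padSeq_mul (m : ℕ) :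
    ∑ i ∈ range (m + 1), padSeq p (m + 1) α i * padSeq p (m + 1) α (i + 1) =
      p * α 1 + ∑ i ∈ Icc 1 m, α i * α (i + 1) := by
  rw [sum_range_succ_eq_add_sum_Icc, padSeq_of_mem p _ α le_rfl (by omega)]
  congr 1
  refine sum_congr rfl fun i hi => ?_
  have hi := mem_Icc.1 hi
  rw [padSeq_of_mem p _ α hi.1 (by omega), padSeq_of_mem p _ α (by omega) (by omega)]

end PadSeq

theorem stmt_5_general (k : ℕ) (p : ℤ) (α β : ℕ → ℤ)
    (hαmono : ∀ i, 1 ≤ i → i < k → α (i + 1) ≤ α i)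
    (hβmono : ∀ i, 1 ≤ i → i < k → β (i + 1) ≤ β i)
    (hαnn : ∀ i, 1 ≤ i → i ≤ k → 0 ≤ α i)
    (hβnn : ∀ i, 1 ≤ i → i ≤ k → 0 ≤ β i)
    (hαub : ∀ i, 1 ≤ i → i ≤ k → α i ≤ p)
    (hβub : ∀ i, 1 ≤ i → i ≤ k → β i ≤ p)
    (hmaj : ∀ j, 1 ≤ j → j ≤ k →
      ∑ i ∈ Finset.Icc 1 j, α i ≤ ∑ i ∈ Finset.Icc 1 j, β i)
    (heq : p * α 1 + ∑ i ∈ Finset.Icc 1 (k - 1), α i * α (i + 1) =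
      p * β 1 + ∑ i ∈ Finset.Icc 1 (k - 1), β i * β (i + 1)) :
    ∀ i, 1 ≤ i → i ≤ k → α i = β i := by
  intro i hi hik
  obtain ⟨m, rfl⟩ : ∃ m, k = m + 1 := ⟨k - 1, by omega⟩
  have hpadmaj : ∀ j ≤ m + 2,
      ∑ i ∈ range j, padSeq p (m + 1) α i ≤ ∑ i ∈ range j, padSeq p (m + 1) β i := by
    rintro (_ | j) hj
    · simp
    rw [sum_range_succ_padSeq p _ α (by omega), sum_range_succ_padSeq p _ β (by omega)]
    rcases Nat.eq_zero_or_pos j with rfl | hj1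
    · simp
    · linarith [hmaj j hj1 (by omega)]
  have hpad := eq_of_sum_mul_succ_eq
    (antitone_padSeq p _ α (by omega) hαmono hαnn hαub)
    (antitone_padSeq p _ β (by omega) hβmono hβnn hβub)
    (by rw [padSeq_of_mem p _ α (by omega) le_rfl]; exact hαnn _ (by omega) le_rfl)
    (by simp [padSeq]) (by simp [padSeq]) hpadmaj
    (by rw [sum_range_padSeq_mul, sum_range_padSeq_mul]; simpa using heq) i hik
  rwa [padSeq_of_mem p _ α hi hik, padSeq_of_mem p _ β hi hik] at hpad

/-- Lemma 2.2 (equality case of the products inequality): if the weighted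
products sums are equal, then αᵢ = βᵢ for all i. -/
theorem stmt_5 (k : ℕ) (p : ℤ) (hp : 0 ≤ p) (α β : ℕ → ℤ)
    (hαmono : ∀ i, 1 ≤ i → i < k → α (i + 1) ≤ α i)
    (hβmono : ∀ i, 1 ≤ i → i < k → β (i + 1) ≤ β i)
    (hαnn : ∀ i, 1 ≤ i → i ≤ k → 0 ≤ α i)
    (hβnn : ∀ i, 1 ≤ i → i ≤ k → 0 ≤ β i)
    (hαub : ∀ i, 1 ≤ i → i ≤ k → α i ≤ p)
    (hβub : ∀ i, 1 ≤ i → i ≤ k → β i ≤ p)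
    (hmaj : ∀ j, 1 ≤ j → j ≤ k →
      ∑ i ∈ Finset.Icc 1 j, α i ≤ ∑ i ∈ Finset.Icc 1 j, β i)
    (heq : p * α 1 + ∑ i ∈ Finset.Icc 1 (k - 1), α i * α (i + 1) =
      p * β 1 + ∑ i ∈ Finset.Icc 1 (k - 1), β i * β (i + 1)) :
    ∀ i, 1 ≤ i → i ≤ k → α i = β i :=
  stmt_5_general k p α β hαmono hβmono hαnn hβnn hαub hβub hmaj heq
end

section
/- Let p ≥ 0 and let α, β : ℕ → ℕ be eventually-zero non-increasing sequences with α_i ≤ p and β_i ≤ p for all i ≥ 1, and Σ_{i=1}^j α_i ≤ Σ_{i=1}^j β_i for all j ≥ 1. Then p·α₁ + Σ_{i≥1} α_i α_{i+1} ≤ p·β₁ + Σ_{i≥1} β_i β_{i+1}, with equality if and only if α = β. -/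
/-!
Prepend `p` as a zeroth term: with `a = (p, α₁, α₂, …)` and `b = (p, β₁, β₂, …)` the two sides
become `∑ aᵢ aᵢ₊₁` and `∑ bᵢ bᵢ₊₁`, and `a`, `b` are non-increasing with the prefix sums of `a`
bounded by those of `b`. By Abel summation, prefix-sum domination is preserved under pairing with
any non-increasing nonnegative weight, so
`∑ aᵢ aᵢ₊₁ ≤ ∑ aᵢ bᵢ₊₁` (weights `aᵢ`) and `∑ bᵢ₊₁ aᵢ ≤ ∑ bᵢ₊₁ bᵢ` (weights `bᵢ₊₁`).
If `m` is the first index with `aₘ ≠ bₘ`, then `aₘ < bₘ ≤ bₘ₋₁ = aₘ₋₁`: the weight `a` drops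
exactly where the prefix sums first differ, which makes the first inequality strict.
-/

open Finset

section Abel

variable {R : Type*} [Ring R]

theorem sum_range_mul_eq_sum_sub_mul_partialSum (w x : ℕ → R) (N : ℕ) :
    ∑ i ∈ range N, w i * x i =
      ∑ i ∈ range N, (w i - w (i + 1)) * ∑ k ∈ range (i + 1), x k +
        w N * ∑ k ∈ range N, x k := by
  induction N with
  | zero => simp
  | succ N ih =>
    rw [sum_range_succ, ih, sum_range_succ, sum_range_succ x N]
    noncomm_ring

variable [PartialOrder R] {w x y : ℕ → R} {N : ℕ}

theorem sum_range_mul_le_of_partialSum_le [IsOrderedRing R] (hw : Antitone w) (hwN : 0 ≤ w N)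
    (hxy : ∀ n ≤ N, ∑ k ∈ range n, x k ≤ ∑ k ∈ range n, y k) :
    ∑ i ∈ range N, w i * x i ≤ ∑ i ∈ range N, w i * y i := by
  rw [sum_range_mul_eq_sum_sub_mul_partialSum, sum_range_mul_eq_sum_sub_mul_partialSum w y]
  refine add_le_add (sum_le_sum fun i hi => ?_) ?_
  · exact mul_le_mul_of_nonneg_left (hxy _ (mem_range.1 hi)) (sub_nonneg.2 (hw i.le_succ))
  · exact mul_le_mul_of_nonneg_left (hxy N le_rfl) hwN

theorem sum_range_mul_lt_of_partialSum_le [IsStrictOrderedRing R] (hw : Antitone w)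
    (hwN : 0 ≤ w N) (hxy : ∀ n ≤ N, ∑ k ∈ range n, x k ≤ ∑ k ∈ range n, y k)
    {m : ℕ} (hm : m < N) (hwm : w (m + 1) < w m)
    (hxym : ∑ k ∈ range (m + 1), x k < ∑ k ∈ range (m + 1), y k) :
    ∑ i ∈ range N, w i * x i < ∑ i ∈ range N, w i * y i := by
  rw [sum_range_mul_eq_sum_sub_mul_partialSum, sum_range_mul_eq_sum_sub_mul_partialSum w y]
  refine add_lt_add_of_lt_of_le (sum_lt_sum (fun i hi => ?_) ⟨m, mem_range.2 hm, ?_⟩) ?_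
  · exact mul_le_mul_of_nonneg_left (hxy _ (mem_range.1 hi)) (sub_nonneg.2 (hw i.le_succ))
  · exact mul_lt_mul_of_pos_left hxym (sub_pos.2 hwm)
  · exact mul_le_mul_of_nonneg_left (hxy N le_rfl) hwN

end Abel

theorem partialSum_succ_le_of_partialSum_le {M : Type*} [AddCommMonoid M] [PartialOrder M]
    [IsOrderedCancelAddMonoid M] {a b : ℕ → M} (h0 : a 0 = b 0)
    (hab : ∀ n, ∑ k ∈ range n, a k ≤ ∑ k ∈ range n, b k) (n : ℕ) :
    ∑ k ∈ range n, a (k + 1) ≤ ∑ k ∈ range n, b (k + 1) := by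
  have := hab (n + 1)
  rwa [sum_range_succ', sum_range_succ' b, h0, add_le_add_iff_right] at this

section Adjacent

variable {R : Type*} [CommRing R] [PartialOrder R] {a b : ℕ → R}

theorem sum_range_mul_succ_le_of_partialSum_le [IsOrderedRing R] (hb : Antitone b) (hb0 : 0 ≤ b)
    (hab : ∀ n, ∑ k ∈ range n, a k ≤ ∑ k ∈ range n, b k) (N : ℕ) :
    ∑ i ∈ range N, a i * b (i + 1) ≤ ∑ i ∈ range N, b i * b (i + 1) := by
  simp_rw [mul_comm _ (b (_ + 1))]
  exact sum_range_mul_le_of_partialSum_le (hb.comp_monotone fun _ _ h => Nat.succ_le_succ h)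
    (hb0 _) fun n _ => hab n

theorem sum_range_mul_succ_le_sum_range_mul_succ [IsOrderedRing R] (ha : Antitone a)
    (hb : Antitone b) (ha0 : 0 ≤ a) (hb0 : 0 ≤ b) (h0 : a 0 = b 0)
    (hab : ∀ n, ∑ k ∈ range n, a k ≤ ∑ k ∈ range n, b k) (N : ℕ) :
    ∑ i ∈ range N, a i * a (i + 1) ≤ ∑ i ∈ range N, b i * b (i + 1) :=
  (sum_range_mul_le_of_partialSum_le ha (ha0 N) fun n _ =>
    partialSum_succ_le_of_partialSum_le h0 hab n).trans
    (sum_range_mul_succ_le_of_partialSum_le hb hb0 hab N)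

theorem sum_range_mul_succ_lt_sum_range_mul_succ [IsStrictOrderedRing R] (ha : Antitone a)
    (hb : Antitone b) (ha0 : 0 ≤ a) (hb0 : 0 ≤ b) (h0 : a 0 = b 0)
    (hab : ∀ n, ∑ k ∈ range n, a k ≤ ∑ k ∈ range n, b k) {N : ℕ} (hne : ∃ m ≤ N, a m ≠ b m) :
    ∑ i ∈ range N, a i * a (i + 1) < ∑ i ∈ range N, b i * b (i + 1) := by
  classical
  obtain ⟨j, hj⟩ : ∃ j, Nat.find hne = j + 1 :=
    Nat.exists_eq_add_one.2 (Nat.pos_of_ne_zero fun h => (Nat.find_spec hne).2 (h ▸ h0))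
  have hjN : j < N := by have := (Nat.find_spec hne).1; omega
  have hpre : ∀ k ≤ j, a k = b k := fun k hk => by
    by_contra h
    exact Nat.find_min hne (by omega : k < Nat.find hne) ⟨by omega, h⟩
  have hsum : ∑ k ∈ range j, a (k + 1) = ∑ k ∈ range j, b (k + 1) :=
    sum_congr rfl fun k hk => hpre (k + 1) (mem_range.1 hk)
  have hlt : a (j + 1) < b (j + 1) := by
    have hle := partialSum_succ_le_of_partialSum_le h0 hab (j + 1)
    rw [sum_range_succ, sum_range_succ (fun k => b (k + 1)), hsum, add_le_add_iff_left] at hle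
    exact hle.lt_of_ne (hj ▸ (Nat.find_spec hne).2)
  refine (sum_range_mul_lt_of_partialSum_le ha (ha0 N)
    (fun n _ => partialSum_succ_le_of_partialSum_le h0 hab n) hjN ?_ ?_).trans_le
    (sum_range_mul_succ_le_of_partialSum_le hb hb0 hab N)
  · exact hlt.trans_le ((hb j.le_succ).trans_eq (hpre j le_rfl).symm)
  · rw [sum_range_succ, sum_range_succ (fun k => b (k + 1)), hsum]
    exact add_lt_add_right hlt _

end Adjacent

namespace Nat

variable {a b : ℕ → ℕ}

theorem sum_range_mul_succ_le_sum_range_mul_succ (ha : Antitone a) (hb : Antitone b)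
    (h0 : a 0 = b 0) (hab : ∀ n, ∑ k ∈ range n, a k ≤ ∑ k ∈ range n, b k) (N : ℕ) :
    ∑ i ∈ range N, a i * a (i + 1) ≤ ∑ i ∈ range N, b i * b (i + 1) := by
  have := _root_.sum_range_mul_succ_le_sum_range_mul_succ (R := ℤ) (a := fun i => a i)
    (b := fun i => b i) (Nat.mono_cast.comp_antitone ha) (Nat.mono_cast.comp_antitone hb)
    (fun _ => Nat.cast_nonneg _) (fun _ => Nat.cast_nonneg _) (congrArg _ h0)
    (fun n => by exact_mod_cast hab n) N
  exact_mod_cast this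

theorem sum_range_mul_succ_lt_sum_range_mul_succ (ha : Antitone a) (hb : Antitone b)
    (h0 : a 0 = b 0) (hab : ∀ n, ∑ k ∈ range n, a k ≤ ∑ k ∈ range n, b k) {N : ℕ}
    (hne : ∃ m ≤ N, a m ≠ b m) :
    ∑ i ∈ range N, a i * a (i + 1) < ∑ i ∈ range N, b i * b (i + 1) := by
  have := _root_.sum_range_mul_succ_lt_sum_range_mul_succ (R := ℤ) (a := fun i => a i)
    (b := fun i => b i) (Nat.mono_cast.comp_antitone ha) (Nat.mono_cast.comp_antitone hb)
    (fun _ => Nat.cast_nonneg _) (fun _ => Nat.cast_nonneg _) (congrArg _ h0)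
    (fun n => by exact_mod_cast hab n) (by simpa using hne)
  exact_mod_cast this

end Nat

section UpdateZero

open Function

theorem antitone_update_zero {M : Type*} [Preorder M] {α : ℕ → M} {p : M}
    (hα : ∀ i, 1 ≤ i → α (i + 1) ≤ α i) (hp : α 1 ≤ p) : Antitone (update α 0 p) := by
  refine antitone_nat_of_succ_le fun n => ?_
  cases n with
  | zero => simpa using hp
  | succ n => simpa using hα (n + 1) n.succ_pos

theorem sum_range_succ_update_zero {M : Type*} [AddCommMonoid M] (α : ℕ → M) (p : M) (n : ℕ) :
    ∑ k ∈ range (n + 1), update α 0 p k = p + ∑ i ∈ Icc 1 n, α i := by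
  induction n with
  | zero => simp
  | succ n ih => rw [sum_range_succ, ih, sum_Icc_succ_top (by omega), add_assoc,
      update_of_ne n.succ_ne_zero]

theorem partialSum_update_zero_le {M : Type*} [AddCommMonoid M] [PartialOrder M]
    [IsOrderedAddMonoid M] {α β : ℕ → M} (p : M)
    (h : ∀ j, 1 ≤ j → ∑ i ∈ Icc 1 j, α i ≤ ∑ i ∈ Icc 1 j, β i) (n : ℕ) :
    ∑ k ∈ range n, update α 0 p k ≤ ∑ k ∈ range n, update β 0 p k := by
  rcases n with _ | _ | n
  · simp
  · simp
  · rw [sum_range_succ_update_zero, sum_range_succ_update_zero]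
    exact add_le_add le_rfl (h _ n.succ_pos)

theorem mul_add_finsum_eq_sum_range_update_zero {M : Type*} [Semiring M] {α : ℕ → M} (p : M)
    {N : ℕ} (hN : ∀ i, N < i → α i = 0) :
    p * α 1 + ∑ᶠ i : ℕ, α (i + 1) * α (i + 2) =
      ∑ i ∈ range (N + 1), update α 0 p i * update α 0 p (i + 1) := by
  rw [finsum_eq_sum_of_support_subset (s := range N), sum_range_succ', add_comm]
  · simp
  · intro i hi
    rw [mem_coe, mem_range]
    by_contra h
    exact hi (by simp only [hN (i + 1) (by omega), zero_mul])

end UpdateZero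

/-- Infinite-sequence version of the products inequality, with equality
characterization: for eventually-zero non-increasing sequences bounded by p
with β weakly majorizing α,
p·α₁ + Σ_{i≥1} αᵢα_{i+1} ≤ p·β₁ + Σ_{i≥1} βᵢβ_{i+1},
with equality iff α = β (on indices ≥ 1). -/
theorem stmt_9 (p : ℕ) (α β : ℕ → ℕ)
    (hαmono : ∀ i, 1 ≤ i → α (i + 1) ≤ α i)
    (hβmono : ∀ i, 1 ≤ i → β (i + 1) ≤ β i)
    (hαub : ∀ i, 1 ≤ i → α i ≤ p)
    (hβub : ∀ i, 1 ≤ i → β i ≤ p)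
    (hα0 : ∃ N, ∀ i, N ≤ i → α i = 0)
    (hβ0 : ∃ N, ∀ i, N ≤ i → β i = 0)
    (hmaj : ∀ j, 1 ≤ j →
      ∑ i ∈ Finset.Icc 1 j, α i ≤ ∑ i ∈ Finset.Icc 1 j, β i) :
    (p * α 1 + ∑ᶠ i : ℕ, α (i + 1) * α (i + 2) ≤
      p * β 1 + ∑ᶠ i : ℕ, β (i + 1) * β (i + 2)) ∧
    ((p * α 1 + ∑ᶠ i : ℕ, α (i + 1) * α (i + 2) =
      p * β 1 + ∑ᶠ i : ℕ, β (i + 1) * β (i + 2)) ↔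
      ∀ i, 1 ≤ i → α i = β i) := by
  obtain ⟨Nα, hNα⟩ := hα0
  obtain ⟨Nβ, hNβ⟩ := hβ0
  have hαN : ∀ i, Nα + Nβ < i → α i = 0 := fun i hi => hNα i (by omega)
  have hβN : ∀ i, Nα + Nβ < i → β i = 0 := fun i hi => hNβ i (by omega)
  have ha := antitone_update_zero hαmono (hαub 1 le_rfl)
  have hb := antitone_update_zero hβmono (hβub 1 le_rfl)
  have h0 : Function.update α 0 p 0 = Function.update β 0 p 0 := by simp
  have hab := partialSum_update_zero_le p hmaj
  rw [mul_add_finsum_eq_sum_range_update_zero p hαN, mul_add_finsum_eq_sum_range_update_zero p hβN]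
  refine ⟨Nat.sum_range_mul_succ_le_sum_range_mul_succ ha hb h0 hab _, fun heq => ?_, fun h => ?_⟩
  · by_contra! hne
    obtain ⟨i, hi1, hi⟩ := hne
    have hiN : i ≤ Nα + Nβ + 1 := by
      by_contra
      exact hi (by rw [hαN i (by omega), hβN i (by omega)])
    refine (Nat.sum_range_mul_succ_lt_sum_range_mul_succ ha hb h0 hab ⟨i, hiN, ?_⟩).ne heq
    rwa [Function.update_of_ne (by omega), Function.update_of_ne (by omega)]
  · have hαβ : Function.update α 0 p = Function.update β 0 p := by
      funext i
      rcases i with _ | i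
      · simp
      · simp [h (i + 1) i.succ_pos]
    rw [hαβ]
end

section
/- Let r, r', ℓ, ℓ' : ℕ → ℕ and, for each λ in a finite index set, W(λ), W'(λ) : ℕ → ℕ be eventually-zero non-increasing sequences satisfying: r'_i = r_i + 1 for 0 ≤ i ≤ p and r'_i = r_i for i > p; ℓ'_i = ℓ_i + 1 for 0 ≤ i ≤ q and ℓ'_i = ℓ_i for i > q; the index set contains λ₁,…,λ_s and positive integers n₁,…,n_s with n₁ + ⋯ + n_s = p + q + 1, W(λ_k)_i = W'(λ_k)_i + 1 for 1 ≤ i ≤ n_k and W(λ_k)_i = W'(λ_k)_i for i > n_k, and W(λ) = W'(λ) for λ ∉ {λ₁,…,λ_s}. Define m = Σ_{i≥1} r'_i + Σ_{i≥0} ℓ'_i + Σ_λ Σ_{i≥1} W'(λ)_i and n = Σ_{i≥0} r'_i + Σ_{i≥1} ℓ'_i + Σ_λ Σ_{i≥1} W'(λ)_i. Then Σ_{i≥0} r_i r_{i+1} + Σ_{i≥0} ℓ_i ℓ_{i+1} + Σ_λ Σ_{i≥1} W'(λ)_i² + (m+n) ≥ Σ_{i≥0} r'_i r'_{i+1} +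 Σ_{i≥0} ℓ'_i ℓ'_{i+1} + Σ_λ Σ_{i≥1} W(λ)_i² + 1. -/
/-!
Raising the first `p + 1` terms of `r` by one raises each product `r i * r (i + 1)` with
`i ≤ p` by at most `r' i + r' (i + 1) - 1`, so `∑ r' i * r' (i + 1)` exceeds `∑ r i * r (i + 1)`
by at most `∑ r' i + ∑ r' (i + 1) - (p + 1)`; the same holds for `l` with `q + 1`.
Raising `n_k` terms of `W' (λ_k)` by one raises the sum of squares by at most
`2 ∑ W' (λ_k) i + n_k`. Since `∑ n_k = p + q + 1` and `m + n` contains each of the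
sums `∑ r' i`, `∑ r' (i + 1)`, `∑ l' i`, `∑ l' (i + 1)` once and `∑ W'` twice,
the net change is at least `(p + 1) + (q + 1) - (p + q + 1) = 1`.
-/

open Finset

theorem finsum_eq_sum_range_of_eq_zero {M : Type*} [AddCommMonoid M] {f : ℕ → M} {N : ℕ}
    (h : ∀ i, N ≤ i → f i = 0) : ∑ᶠ i, f i = ∑ i ∈ range N, f i :=
  finsum_eq_sum_of_support_subset f fun i hi => by
    simpa using not_le.mp (mt (h i) hi)

theorem sum_range_ite_lt {c N : ℕ} (h : c ≤ N) :
    ∑ i ∈ range N, (if i < c then 1 else 0) = c := by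
  rw [sum_boole, range_eq_Ico, Ico_filter_lt, Nat.card_Ico, min_eq_right h]
  simp

theorem finsum_mul_succ_add_le {p : ℕ} {r r' : ℕ → ℕ}
    (hfin : ∃ N, ∀ i, N ≤ i → r' i = 0)
    (hle : ∀ i, i ≤ p → r' i = r i + 1) (hgt : ∀ i, p < i → r' i = r i) :
    ∑ᶠ i, r' i * r' (i + 1) + (p + 1) ≤
      ∑ᶠ i, r i * r (i + 1) + ∑ᶠ i, r' i + ∑ᶠ i, r' (i + 1) := by
  obtain ⟨N, hN⟩ := hfin
  set M := N + p + 1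
  have hr'M : ∀ i, M ≤ i → r' i = 0 := fun i hi => hN i (by omega)
  have hrM : ∀ i, M ≤ i → r i = 0 := fun i hi => by rw [← hgt i (by omega), hr'M i hi]
  have step : ∀ i, r' i * r' (i + 1) + (if i < p + 1 then 1 else 0) ≤
      r i * r (i + 1) + (r' i + r' (i + 1)) := by
    intro i
    rcases lt_trichotomy i p with h | rfl | h
    · rw [hle i h.le, hle (i + 1) h, if_pos (by omega)]
      ring_nf
      omega
    · rw [hle i le_rfl, hgt (i + 1) (by omega), if_pos (by omega)]
      ring_nf
      omega
    · rw [hgt i h, hgt (i + 1) (by omega), if_neg (by omega)]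
      omega
  rw [finsum_eq_sum_range_of_eq_zero (N := M) fun i hi => by simp [hr'M i hi],
    finsum_eq_sum_range_of_eq_zero (N := M) fun i hi => by simp [hrM i hi],
    finsum_eq_sum_range_of_eq_zero (N := M) hr'M,
    finsum_eq_sum_range_of_eq_zero (N := M) fun i hi => hr'M (i + 1) (by omega),
    add_assoc _ (∑ i ∈ range M, r' i), ← sum_add_distrib, ← sum_add_distrib,
    ← sum_range_ite_lt (show p + 1 ≤ M by omega), ← sum_add_distrib]
  exact sum_le_sum fun i _ => step i

theorem finsum_sq_succ_le {n : ℕ} {w w' : ℕ → ℕ}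
    (hfin : ∃ N, ∀ i, N ≤ i → w' i = 0)
    (hle : ∀ i, 1 ≤ i → i ≤ n → w i = w' i + 1) (hgt : ∀ i, n < i → w i = w' i) :
    ∑ᶠ i, w (i + 1) ^ 2 ≤ ∑ᶠ i, w' (i + 1) ^ 2 + 2 * ∑ᶠ i, w' (i + 1) + n := by
  obtain ⟨N, hN⟩ := hfin
  set M := N + n
  have hw'M : ∀ i, M ≤ i → w' (i + 1) = 0 := fun i hi => hN (i + 1) (by omega)
  have hwM : ∀ i, M ≤ i → w (i + 1) = 0 := fun i hi => by
    rw [hgt (i + 1) (by omega), hw'M i hi]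
  have step : ∀ i, w (i + 1) ^ 2 ≤
      w' (i + 1) ^ 2 + 2 * w' (i + 1) + (if i < n then 1 else 0) := by
    intro i
    by_cases h : i < n
    · rw [hle (i + 1) (by omega) (by omega), if_pos h]
      exact le_of_eq (by ring)
    · rw [hgt (i + 1) (by omega), if_neg h]
      omega
  rw [finsum_eq_sum_range_of_eq_zero (N := M) fun i hi => by simp [hwM i hi],
    finsum_eq_sum_range_of_eq_zero (N := M) fun i hi => by simp [hw'M i hi],
    finsum_eq_sum_range_of_eq_zero (N := M) hw'M, mul_sum,
    ← sum_range_ite_lt (show n ≤ M by omega), ← sum_add_distrib, ← sum_add_distrib]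
  exact sum_le_sum fun i _ => step i

theorem sum_finsum_sq_succ_le {Λ κ : Type*} [Fintype Λ] [Fintype κ]
    {W W' : Λ → ℕ → ℕ} (lam : κ → Λ) (nk : κ → ℕ)
    (hfin : ∀ a, ∃ N, ∀ i, N ≤ i → W' a i = 0)
    (hle : ∀ k i, 1 ≤ i → i ≤ nk k → W (lam k) i = W' (lam k) i + 1)
    (hgt : ∀ k i, nk k < i → W (lam k) i = W' (lam k) i)
    (hother : ∀ a, (∀ k, lam k ≠ a) → W a = W' a) :
    ∑ᶠ a, ∑ᶠ i, W a (i + 1) ^ 2 ≤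
      ∑ᶠ a, ∑ᶠ i, W' a (i + 1) ^ 2 + 2 * ∑ᶠ a, ∑ᶠ i, W' a (i + 1) + ∑ k, nk k := by
  classical
  set d : Λ → ℕ := fun a => ∑ k with lam k = a, nk k
  have step : ∀ a, ∑ᶠ i, W a (i + 1) ^ 2 ≤
      ∑ᶠ i, W' a (i + 1) ^ 2 + 2 * ∑ᶠ i, W' a (i + 1) + d a := by
    intro a
    by_cases ha : ∃ k, lam k = a
    · obtain ⟨k, rfl⟩ := ha
      have hk : nk k ≤ d (lam k) := single_le_sum (fun _ _ => Nat.zero_le _) (by simp)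
      have := finsum_sq_succ_le (hfin (lam k)) (hle k) (hgt k)
      omega
    · rw [hother a (not_exists.mp ha)]
      omega
  simp only [finsum_eq_sum_of_fintype]
  rw [← sum_fiberwise univ lam nk, mul_sum, ← sum_add_distrib, ← sum_add_distrib]
  exact sum_le_sum fun a _ => step a

theorem stmt_11_general (p q : ℕ) (r r' l l' : ℕ → ℕ)
    (Λ : Type*) [Fintype Λ] (W W' : Λ → ℕ → ℕ)
    (s : ℕ) (lam : Fin s → Λ) (nk : Fin s → ℕ)
    (hnksum : ∑ k : Fin s, nk k = p + q + 1)
    -- non-increasing, eventually zero data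
    (hr'0 : ∃ N, ∀ i, N ≤ i → r' i = 0)
    (hl'0 : ∃ N, ∀ i, N ≤ i → l' i = 0)
    (hW'0 : ∀ a, ∃ N, ∀ i, N ≤ i → W' a i = 0)
    -- the relation between the primed and unprimed data
    (hr : ∀ i, i ≤ p → r' i = r i + 1) (hrgt : ∀ i, p < i → r' i = r i)
    (hl : ∀ i, i ≤ q → l' i = l i + 1) (hlgt : ∀ i, q < i → l' i = l i)
    (hW : ∀ k : Fin s, ∀ i, 1 ≤ i → i ≤ nk k →
      W (lam k) i = W' (lam k) i + 1)
    (hWgt : ∀ k : Fin s, ∀ i, nk k < i → W (lam k) i = W' (lam k) i)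
    (hWother : ∀ a : Λ, (∀ k, lam k ≠ a) → W a = W' a)
    -- the sizes m and n
    (m n : ℕ)
    (hm : m = (∑ᶠ i : ℕ, r' (i + 1)) + (∑ᶠ i : ℕ, l' i) +
      ∑ᶠ a : Λ, ∑ᶠ i : ℕ, W' a (i + 1))
    (hn : n = (∑ᶠ i : ℕ, r' i) + (∑ᶠ i : ℕ, l' (i + 1)) +
      ∑ᶠ a : Λ, ∑ᶠ i : ℕ, W' a (i + 1)) :
    (∑ᶠ i : ℕ, r' i * r' (i + 1)) + (∑ᶠ i : ℕ, l' i * l' (i + 1)) +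
      (∑ᶠ a : Λ, ∑ᶠ i : ℕ, (W a (i + 1)) ^ 2) + 1 ≤
    (∑ᶠ i : ℕ, r i * r (i + 1)) + (∑ᶠ i : ℕ, l i * l (i + 1)) +
      (∑ᶠ a : Λ, ∑ᶠ i : ℕ, (W' a (i + 1)) ^ 2) + (m + n) := by
  have hR := finsum_mul_succ_add_le hr'0 hr hrgt
  have hL := finsum_mul_succ_add_le hl'0 hl hlgt
  have hWsq := sum_finsum_sq_succ_le lam nk hW'0 hW hWgt hWother
  rw [hnksum] at hWsq
  omega

/-- Combinatorial core of the rank-drop case (rule 6,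
L_p ⊕ L_qᵀ ⇝ ⊕ J_{n_k}(λ_k)) in the proof of the main theorem: the
codimension increases by at least 1 under this change. -/
theorem stmt_11 (p q : ℕ) (r r' l l' : ℕ → ℕ)
    (Λ : Type*) [Fintype Λ] (W W' : Λ → ℕ → ℕ)
    (s : ℕ) (lam : Fin s → Λ) (hlam : Function.Injective lam)
    (nk : Fin s → ℕ) (hnk : ∀ k, 1 ≤ nk k)
    (hnksum : ∑ k : Fin s, nk k = p + q + 1)
    -- non-increasing, eventually zero data
    (hrmono : ∀ i, r (i + 1) ≤ r i) (hr'mono : ∀ i, r' (i + 1) ≤ r' i)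
    (hlmono : ∀ i, l (i + 1) ≤ l i) (hl'mono : ∀ i, l' (i + 1) ≤ l' i)
    (hWmono : ∀ a, ∀ i, 1 ≤ i → W a (i + 1) ≤ W a i)
    (hW'mono : ∀ a, ∀ i, 1 ≤ i → W' a (i + 1) ≤ W' a i)
    (hr0 : ∃ N, ∀ i, N ≤ i → r i = 0) (hr'0 : ∃ N, ∀ i, N ≤ i → r' i = 0)
    (hl0 : ∃ N, ∀ i, N ≤ i → l i = 0) (hl'0 : ∃ N, ∀ i, N ≤ i → l' i = 0)
    (hW0 : ∀ a, ∃ N, ∀ i, N ≤ i → W a i = 0)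
    (hW'0 : ∀ a, ∃ N, ∀ i, N ≤ i → W' a i = 0)
    -- the relation between the primed and unprimed data
    (hr : ∀ i, i ≤ p → r' i = r i + 1) (hrgt : ∀ i, p < i → r' i = r i)
    (hl : ∀ i, i ≤ q → l' i = l i + 1) (hlgt : ∀ i, q < i → l' i = l i)
    (hW : ∀ k : Fin s, ∀ i, 1 ≤ i → i ≤ nk k →
      W (lam k) i = W' (lam k) i + 1)
    (hWgt : ∀ k : Fin s, ∀ i, nk k < i → W (lam k) i = W' (lam k) i)
    (hWother : ∀ a : Λ, (∀ k, lam k ≠ a) → W a = W' a)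
    -- standing positivity hypotheses
    (hr'p : 1 ≤ r' p) (hl'q : 1 ≤ l' q)
    -- the sizes m and n
    (m n : ℕ)
    (hm : m = (∑ᶠ i : ℕ, r' (i + 1)) + (∑ᶠ i : ℕ, l' i) +
      ∑ᶠ a : Λ, ∑ᶠ i : ℕ, W' a (i + 1))
    (hn : n = (∑ᶠ i : ℕ, r' i) + (∑ᶠ i : ℕ, l' (i + 1)) +
      ∑ᶠ a : Λ, ∑ᶠ i : ℕ, W' a (i + 1)) :
    (∑ᶠ i : ℕ, r' i * r' (i + 1)) + (∑ᶠ i : ℕ, l' i * l' (i + 1)) +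
      (∑ᶠ a : Λ, ∑ᶠ i : ℕ, (W a (i + 1)) ^ 2) + 1 ≤
    (∑ᶠ i : ℕ, r i * r (i + 1)) + (∑ᶠ i : ℕ, l i * l (i + 1)) +
      (∑ᶠ a : Λ, ∑ᶠ i : ℕ, (W' a (i + 1)) ^ 2) + (m + n) :=
  stmt_11_general p q r r' l l' Λ W W' s lam nk hnksum hr'0 hl'0 hW'0 hr hrgt hl hlgt hW hWgt
    hWother m n hm hn
end

section
/- Let α₁ ≥ ⋯ ≥ α_k ≥ 0 and β₁ ≥ ⋯ ≥ β_k ≥ 0 be integers with Σ_{i=1}^j α_i ≤ Σ_{i=1}^j β_i for all j. If Σ_{i=1}^j (β_i − α_i) > 0 for every j = 1,…,k and Σ_{i=1}^k α_i² = Σ_{i=1}^k β_i², then α_j = β_j = 0 for all j, a contradiction; hence under the equality of sums of squares there exists j with Σ_{i=1}^j (β_i − α_i) = 0, and the minimal such j equals 1. -/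
/-!
Put `c = β + α` and `d = β - α`, so that `∑ cᵢ dᵢ = ∑ βᵢ² - ∑ αᵢ² = 0`. Summation by parts writes
this sum as `∑_{j<k} (c_j - c_{j+1}) S_j + c_k S_k` with `S_j = ∑_{i ≤ j} dᵢ`; every term is
nonnegative (`c` is non-increasing and nonnegative, `S_j ≥ 0` by majorization), hence zero.
If `α₁ < β₁`, induction shows `αⱼ = α₁` and `βⱼ = β₁` for all `j`: once this holds up to `j`,
`S_j = j (β₁ - α₁) > 0` forces `c_{j+1} = c_j`, and monotonicity splits this equality into its two
summands. Then `S_k > 0` forces `β₁ + α₁ = c_k = 0`, which is impossible.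
-/

open Finset

theorem sum_Icc_one_by_parts {R : Type*} [CommRing R] (c d : ℕ → R) (k : ℕ) :
    ∑ i ∈ Icc 1 k, c i * d i =
      ∑ j ∈ Ico 1 k, (c j - c (j + 1)) * ∑ i ∈ Icc 1 j, d i + c k * ∑ i ∈ Icc 1 k, d i := by
  induction k with
  | zero => simp
  | succ k ih =>
    rcases k.eq_zero_or_pos with rfl | hk
    · simp
    rw [sum_Icc_succ_top (by omega), ih, sum_Ico_succ_top hk, sum_Icc_succ_top (by omega) d]
    ring

theorem sum_Icc_one_sub_eq_nsmul {M : Type*} [AddCommGroup M] {α β : ℕ → M} {j : ℕ}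
    (h : ∀ i ∈ Icc 1 j, α i = α 1 ∧ β i = β 1) :
    ∑ i ∈ Icc 1 j, (β i - α i) = j • (β 1 - α 1) := by
  rw [sum_congr rfl fun i hi => by rw [(h i hi).1, (h i hi).2], sum_const, Nat.card_Icc,
    Nat.add_sub_cancel]

section OrderedRing

variable {R : Type*} [CommRing R] [LinearOrder R] [IsStrictOrderedRing R]

theorem by_parts_terms_eq_zero {c d : ℕ → R} {k : ℕ} (hc : ∀ j ∈ Ico 1 k, c (j + 1) ≤ c j)
    (hck : 0 ≤ c k) (hS : ∀ j ∈ Icc 1 k, 0 ≤ ∑ i ∈ Icc 1 j, d i)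
    (h0 : ∑ i ∈ Icc 1 k, c i * d i = 0) :
    (∀ j ∈ Ico 1 k, (c j - c (j + 1)) * ∑ i ∈ Icc 1 j, d i = 0) ∧
      c k * ∑ i ∈ Icc 1 k, d i = 0 := by
  have hterm : ∀ j ∈ Ico 1 k, 0 ≤ (c j - c (j + 1)) * ∑ i ∈ Icc 1 j, d i := fun j hj =>
    mul_nonneg (sub_nonneg.2 (hc j hj)) (hS j (Ico_subset_Icc_self hj))
  have hlast : 0 ≤ c k * ∑ i ∈ Icc 1 k, d i := by
    rcases k.eq_zero_or_pos with rfl | hk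
    · simp
    · exact mul_nonneg hck (hS k (mem_Icc.2 ⟨hk, le_rfl⟩))
  rw [sum_Icc_one_by_parts, add_eq_zero_iff_of_nonneg (sum_nonneg hterm) hlast,
    sum_eq_zero_iff_of_nonneg hterm] at h0
  exact h0

theorem eq_first_of_sub_first_pos {α β : ℕ → R} {k : ℕ}
    (hα : ∀ j ∈ Ico 1 k, α (j + 1) ≤ α j) (hβ : ∀ j ∈ Ico 1 k, β (j + 1) ≤ β j)
    (hd : 0 < β 1 - α 1)
    (hc : ∀ j ∈ Ico 1 k,
      (β j + α j - (β (j + 1) + α (j + 1))) * ∑ i ∈ Icc 1 j, (β i - α i) = 0) :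
    ∀ j ∈ Icc 1 k, α j = α 1 ∧ β j = β 1 := by
  intro j
  induction j using Nat.strong_induction_on with
  | _ j ih =>
  intro hj
  obtain ⟨hj1, hjk⟩ := mem_Icc.1 hj
  obtain rfl | ⟨j, rfl, hj0⟩ : j = 1 ∨ ∃ i, j = i + 1 ∧ 1 ≤ i := by
    rcases j with _ | _ | j <;> simp_all
  · exact ⟨rfl, rfl⟩
  have hprev : ∀ i ∈ Icc 1 j, α i = α 1 ∧ β i = β 1 := fun i hi =>
    ih i (by simp at hi; omega) (by simp at hi ⊢; omega)
  have hjIco : j ∈ Ico 1 k := mem_Ico.2 ⟨hj0, by omega⟩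
  obtain ⟨hαj, hβj⟩ := hprev j (mem_Icc.2 ⟨hj0, le_rfl⟩)
  have hS : 0 < ∑ i ∈ Icc 1 j, (β i - α i) := by
    rw [sum_Icc_one_sub_eq_nsmul hprev]
    exact nsmul_pos hd (by omega)
  have hcj : β (j + 1) + α (j + 1) = β 1 + α 1 := by
    have := (mul_eq_zero.1 (hc j hjIco)).resolve_right hS.ne'
    rw [hαj, hβj, sub_eq_zero] at this
    exact this.symm
  exact ((add_eq_add_iff_eq_and_eq (hβj ▸ hβ j hjIco) (hαj ▸ hα j hjIco)).1 hcj).symm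

end OrderedRing

/-- Key step in the equality analysis of Lemma 2.2: under weak majorization
and equal sums of squares, some partial sums of β − α vanish, and the minimal
index where they vanish is 1 (i.e. α₁ = β₁). -/
theorem stmt_17 (k : ℕ) (hk : 1 ≤ k) (α β : ℕ → ℤ)
    (hαmono : ∀ i, 1 ≤ i → i < k → α (i + 1) ≤ α i)
    (hβmono : ∀ i, 1 ≤ i → i < k → β (i + 1) ≤ β i)
    (hαnn : ∀ i, 1 ≤ i → i ≤ k → 0 ≤ α i)
    (hβnn : ∀ i, 1 ≤ i → i ≤ k → 0 ≤ β i)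
    (hmaj : ∀ j, 1 ≤ j → j ≤ k →
      ∑ i ∈ Finset.Icc 1 j, α i ≤ ∑ i ∈ Finset.Icc 1 j, β i)
    (heq : ∑ i ∈ Finset.Icc 1 k, (α i) ^ 2 = ∑ i ∈ Finset.Icc 1 k, (β i) ^ 2) :
    (∃ j, 1 ≤ j ∧ j ≤ k ∧ ∑ i ∈ Finset.Icc 1 j, (β i - α i) = 0) ∧
      α 1 = β 1 := by
  have hα : ∀ j ∈ Ico 1 k, α (j + 1) ≤ α j := fun j hj => hαmono j (mem_Ico.1 hj).1 (mem_Ico.1 hj).2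
  have hβ : ∀ j ∈ Ico 1 k, β (j + 1) ≤ β j := fun j hj => hβmono j (mem_Ico.1 hj).1 (mem_Ico.1 hj).2
  have hS : ∀ j ∈ Icc 1 k, 0 ≤ ∑ i ∈ Icc 1 j, (β i - α i) := fun j hj => by
    rw [sum_sub_distrib, sub_nonneg]
    exact hmaj j (mem_Icc.1 hj).1 (mem_Icc.1 hj).2
  have hsq : ∑ i ∈ Icc 1 k, (β i + α i) * (β i - α i) = 0 := by
    simp_rw [← sq_sub_sq, sum_sub_distrib, heq, sub_self]
  obtain ⟨hdrop, hlast⟩ := by_parts_terms_eq_zero (c := fun i => β i + α i)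
    (fun j hj => add_le_add (hβ j hj) (hα j hj)) (add_nonneg (hβnn k hk le_rfl) (hαnn k hk le_rfl))
    hS hsq
  have hαβ : α 1 = β 1 := by
    by_contra hne
    have hd : 0 < β 1 - α 1 :=
      sub_pos.2 (lt_of_le_of_ne (by simpa using hmaj 1 le_rfl hk) hne)
    have hconst := eq_first_of_sub_first_pos hα hβ hd hdrop
    obtain ⟨hαk, hβk⟩ := hconst k (mem_Icc.2 ⟨hk, le_rfl⟩)
    have hSk : 0 < ∑ i ∈ Icc 1 k, (β i - α i) := by
      rw [sum_Icc_one_sub_eq_nsmul hconst]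
      exact nsmul_pos hd (by omega)
    have hck : β k + α k = 0 := (mul_eq_zero.1 hlast).resolve_right hSk.ne'
    linarith [hαnn 1 le_rfl hk]
  exact ⟨⟨1, le_rfl, hk, by simp [hαβ]⟩, hαβ⟩
end
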